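/- arXiv:math/0610960 — 2 statements merged into one kernel-verified Lean document; each statement's English description precedes it below -/
import Mathlib

section
/- For a ≥ 1 an integer, let seg(a) denote the multiset of integers {a−1, a−3, …, −(a−3), −(a−1)} (an arithmetic progression of length a with step 2, centered at 0). If A and B are finite multisets of positive integers such that the multiset sums Σ_{a ∈ A} seg(a) and Σ_{b ∈ B} seg(b) are equal, then A = B as multisets. -/
/-- `seg a` is the multiset `{a-1, a-3, …, -(a-3), -(a-1)}` of integers. -/
def seg (a : ℕ) : Multiset ℤ :=
  (Multiset.range a).map (fun k => (a : ℤ) - 1 - 2 * (k : ℤ))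

lemma mem_seg_self {a : ℕ} (ha : 0 < a) : (a : ℤ) - 1 ∈ seg a := by
  have h0 : (0:ℕ) ∈ Multiset.range a := Multiset.mem_range.mpr ha
  have := Multiset.mem_map_of_mem (fun k : ℕ => (a : ℤ) - 1 - 2 * (k : ℤ)) h0
  simpa [seg] using this

lemma le_of_mem_seg {a : ℕ} {x : ℤ} (hx : x ∈ seg a) : x ≤ (a : ℤ) - 1 := by
  rw [seg, Multiset.mem_map] at hx
  obtain ⟨k, hk, rfl⟩ := hx
  have : ∃ n, n < a ∧ (n : ℤ) = k := by simpa using hk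
  obtain ⟨n, hn, rfl⟩ := this
  omega

lemma exists_max (A : Multiset ℕ) (hA : A ≠ 0) : ∃ m ∈ A, ∀ x ∈ A, x ≤ m := by
  induction A using Multiset.induction with
  | empty => exact absurd rfl hA
  | cons a s ih =>
    rcases eq_or_ne s 0 with rfl | hs
    · exact ⟨a, Multiset.mem_cons_self a 0, by
        intro x hx; rw [Multiset.mem_cons] at hx
        rcases hx with rfl | hx
        · exact le_rfl
        · simp at hx⟩
    · obtain ⟨m, hm, hmax⟩ := ih hs
      refine ⟨max a m, ?_, ?_⟩
      · rcases le_total a m with h | h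
        · rw [max_eq_right h]; exact Multiset.mem_cons_of_mem hm
        · rw [max_eq_left h]; exact Multiset.mem_cons_self a s
      · intro x hx; rw [Multiset.mem_cons] at hx
        rcases hx with rfl | hx
        · exact le_max_left _ _
        · exact le_trans (hmax x hx) (le_max_right _ _)

lemma mem_sum_seg {A : Multiset ℕ} {x : ℤ} :
    x ∈ (A.map seg).sum ↔ ∃ a ∈ A, x ∈ seg a := by
  induction A using Multiset.induction with
  | empty => simp
  | cons a s ih =>
    simp only [Multiset.map_cons, Multiset.sum_cons, Multiset.mem_add, ih, Multiset.mem_cons]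
    constructor
    · rintro (hx | ⟨c, hc, hxc⟩)
      · exact ⟨a, Or.inl rfl, hx⟩
      · exact ⟨c, Or.inr hc, hxc⟩
    · rintro ⟨c, (rfl | hc), hxc⟩
      · exact Or.inl hxc
      · exact Or.inr ⟨c, hc, hxc⟩

/-- If two multisets `A`, `B` of positive integers have the same multiset sum
`Σ_{a∈A} seg a = Σ_{b∈B} seg b`, then `A = B`. -/
theorem stmt3 (A B : Multiset ℕ) (hA : ∀ a ∈ A, 0 < a) (hB : ∀ b ∈ B, 0 < b)
    (h : (A.map seg).sum = (B.map seg).sum) : A = B := by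
  induction A using Multiset.strongInductionOn generalizing B with
  | ih A ih =>
  rcases eq_or_ne A 0 with rfl | hA0
  · by_contra hB0
    obtain ⟨m, hm, _⟩ := exists_max B (Ne.symm hB0)
    have : ((m:ℤ) - 1) ∈ (B.map seg).sum := mem_sum_seg.mpr ⟨m, hm, mem_seg_self (hB m hm)⟩
    rw [← h] at this
    simp at this
  · obtain ⟨m, hm, hmax⟩ := exists_max A hA0
    have hB0 : B ≠ 0 := by
      intro hB0
      have : ((m:ℤ) - 1) ∈ (A.map seg).sum := mem_sum_seg.mpr ⟨m, hm, mem_seg_self (hA m hm)⟩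
      rw [h, hB0] at this
      simp at this
    obtain ⟨m', hm', hmax'⟩ := exists_max B hB0
    have hmm' : m = m' := by
      have h1 : ((m:ℤ) - 1) ∈ (B.map seg).sum := by
        rw [← h]; exact mem_sum_seg.mpr ⟨m, hm, mem_seg_self (hA m hm)⟩
      have h2 : ((m':ℤ) - 1) ∈ (A.map seg).sum := by
        rw [h]; exact mem_sum_seg.mpr ⟨m', hm', mem_seg_self (hB m' hm')⟩
      obtain ⟨b, hb, hxb⟩ := mem_sum_seg.mp h1
      obtain ⟨a, ha, hxa⟩ := mem_sum_seg.mp h2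
      have e1 : (m:ℤ) - 1 ≤ (b:ℤ) - 1 := le_of_mem_seg hxb
      have e2 : (m':ℤ) - 1 ≤ (a:ℤ) - 1 := le_of_mem_seg hxa
      have e3 : (b:ℤ) ≤ m' := by exact_mod_cast hmax' b hb
      have e4 : (a:ℤ) ≤ m := by exact_mod_cast hmax a ha
      omega
    subst hmm'
    have hAe : A = m ::ₘ A.erase m := (Multiset.cons_erase hm).symm
    have hBe : B = m ::ₘ B.erase m := (Multiset.cons_erase hm').symm
    have hsum : ((A.erase m).map seg).sum = ((B.erase m).map seg).sum := by
      have : seg m + ((A.erase m).map seg).sum = seg m + ((B.erase m).map seg).sum := by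
        rw [← Multiset.sum_cons, ← Multiset.sum_cons, ← Multiset.map_cons, ← Multiset.map_cons,
          ← hAe, ← hBe, h]
      exact add_left_cancel this
    have key : A.erase m = B.erase m := by
      refine ih (A.erase m) (Multiset.erase_lt.mpr hm) (B.erase m) ?_ ?_ hsum
      · exact fun a ha => hA a (Multiset.mem_of_mem_erase ha)
      · exact fun b hb => hB b (Multiset.mem_of_mem_erase hb)
    rw [hAe, hBe, key]
end

section
/- Let T be a finite set, G an elementary abelian 2-group acting on an index set of the same cardinality as T via a simply transitive action, let c : G × T → ℂ be an invertible matrix, z ∈ G, and ζ ∈ {±1}. Suppose that for every τ ∈ T, either c(s,τ) = ζ·c(s·z, τ) for all s ∈ G, or c(s,τ) = −ζ·c(s·z, τ)·α(s) for all s ∈ G with some positive reals α(s) independent of τ. Then the number of τ in the first case equals the number in the second case, namely |T|/2. -/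
/-!
A column satisfying both relations satisfies `c(sz,τ) (1 + α(s)) = 0` for all `s`, hence vanishes;
so the two cases are exclusive and between them account for all `|T| = |G|` columns. On the other
hand, since `z² = 1`, a function with `f s = β s * f (s * z)` vanishes at `s` if and only if it
vanishes at `s * z`, so it is determined by its values on a transversal of `⟨z⟩`: for any twist `β`
these functions form a space of dimension at most `|G| / 2`. Each case thus contains at most
`|G| / 2` of the linearly independent columns, which forces equality in both.
-/

open Module

section TwistedEigenspace

variable {K : Type*} [Field K] {G : Type*} [Group G]

variable (K) in
def twistedEigenspace (z : G) (β : G → K) : Submodule K (G → K) where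
  carrier := {f | ∀ s, f s = β s * f (s * z)}
  add_mem' hf hg s := by simp only [Pi.add_apply, hf s, hg s]; ring
  zero_mem' s := by simp
  smul_mem' a f hf s := by simp only [Pi.smul_apply, smul_eq_mul, hf s]; ring

@[simp]
lemma mem_twistedEigenspace {z : G} {β : G → K} {f : G → K} :
    f ∈ twistedEigenspace K z β ↔ ∀ s, f s = β s * f (s * z) :=
  Iff.rfl

lemma eq_one_or_eq_of_mem_zpowers {z w : G} (hz : z * z = 1) (hw : w ∈ Subgroup.zpowers z) :
    w = 1 ∨ w = z := by
  obtain ⟨k, rfl⟩ := hw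
  show z ^ k = 1 ∨ z ^ k = z
  have hz2 : z ^ (2 : ℤ) = 1 := by rw [zpow_two, hz]
  rw [zpow_eq_zpow_emod k hz2]
  rcases Int.emod_two_eq_zero_or_one k with h | h <;> simp [h]

lemma apply_mul_eq_zero_iff {z : G} (hz : z * z = 1) {β : G → K} {f : G → K}
    (hf : f ∈ twistedEigenspace K z β) (s : G) : f (s * z) = 0 ↔ f s = 0 := by
  constructor
  · intro h
    rw [hf s, h, mul_zero]
  · intro h
    rw [hf (s * z), mul_assoc, hz, mul_one, h, mul_zero]

lemma eq_zero_of_forall_out_eq_zero {z : G} (hz : z * z = 1) {β : G → K} {f : G → K}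
    (hf : f ∈ twistedEigenspace K z β) (hout : ∀ q : G ⧸ Subgroup.zpowers z, f q.out = 0) :
    f = 0 := by
  funext g
  obtain ⟨⟨w, hw⟩, hg⟩ := QuotientGroup.mk_out_eq_mul (Subgroup.zpowers z) g
  have hfg := hout g
  rcases eq_one_or_eq_of_mem_zpowers hz hw with rfl | rfl
  · rwa [hg, mul_one] at hfg
  · exact (apply_mul_eq_zero_iff hz hf g).1 (hg ▸ hfg)

lemma finrank_twistedEigenspace_le [Finite G] {z : G} (hz : z * z = 1) (β : G → K) :
    finrank K (twistedEigenspace K z β) ≤ Nat.card (G ⧸ Subgroup.zpowers z) := by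
  have : Fintype (G ⧸ Subgroup.zpowers z) := Fintype.ofFinite _
  let restrict := (LinearMap.funLeft K K (Quotient.out : G ⧸ Subgroup.zpowers z → G)).domRestrict
    (twistedEigenspace K z β)
  have hinj : Function.Injective restrict := by
    rw [← LinearMap.ker_eq_bot, LinearMap.ker_eq_bot']
    intro f hf
    exact Subtype.ext (eq_zero_of_forall_out_eq_zero hz f.2 (congrFun hf))
  exact (LinearMap.finrank_le_finrank_of_injective hinj).trans_eq
    ((finrank_pi K).trans Nat.card_eq_fintype_card.symm)

lemma card_le_of_forall_mem_twistedEigenspace [Finite G] {T : Type*} {c : G → T → K}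
    (hli : LinearIndependent K (fun τ s => c s τ)) {z : G} (hz : z * z = 1) {β : G → K}
    {P : T → Prop} (hP : ∀ τ, P τ → (fun s => c s τ) ∈ twistedEigenspace K z β) :
    Nat.card {τ // P τ} ≤ Nat.card (G ⧸ Subgroup.zpowers z) := by
  have hliP : LinearIndependent K
      (fun τ : {τ // P τ} => (⟨_, hP τ τ.2⟩ : twistedEigenspace K z β)) :=
    .of_comp (twistedEigenspace K z β).subtype (hli.comp _ Subtype.val_injective)
  have : Finite {τ // P τ} := hliP.finite
  have : Fintype {τ // P τ} := Fintype.ofFinite _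
  rw [Nat.card_eq_fintype_card]
  exact hliP.fintype_card_le_finrank.trans (finrank_twistedEigenspace_le hz β)

end TwistedEigenspace

lemma card_eq_two_mul_card_quotient_zpowers {G : Type*} [Group G] {z : G} (hz2 : z * z = 1)
    (hz : z ≠ 1) : Nat.card G = 2 * Nat.card (G ⧸ Subgroup.zpowers z) := by
  rw [Subgroup.card_eq_card_quotient_mul_card_subgroup (Subgroup.zpowers z), Nat.card_zpowers,
    orderOf_eq_prime (by rwa [sq]) hz, mul_comm]

lemma eq_zero_of_forall_eq_mul_of_forall_eq_neg_mul {G : Type*} [Group G] {z : G} {ζ : ℂ}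
    (hζ : ζ ≠ 0) {α : G → ℝ} (hα : ∀ s, 0 < α s) {f : G → ℂ}
    (h₁ : ∀ s, f s = ζ * f (s * z)) (h₂ : ∀ s, f s = -ζ * f (s * z) * α s) : f = 0 := by
  have hfz : ∀ s, f (s * z) = 0 := by
    intro s
    have hprod : ζ * (1 + α s) * f (s * z) = 0 := by linear_combination h₂ s - h₁ s
    have hα' : (1 + α s : ℂ) ≠ 0 := by exact_mod_cast (by linarith [hα s] : 1 + α s ≠ 0)
    simpa [hζ, hα'] using hprod
  funext g
  simpa using hfz (g * z⁻¹)

/-- Dichotomy: let `G` be a finite elementary abelian 2-group (acting on itself, simply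
transitively), `T` a finite set of the same cardinality, and `c : G → T → ℂ` a matrix with
linearly independent columns. Fix `z ∈ G` nontrivial, a sign `ζ = ±1`, and positive reals
`α(s)`. If every column `τ` satisfies either `c(s,τ) = ζ·c(sz,τ)` for all `s`, or
`c(s,τ) = -ζ·c(sz,τ)·α(s)` for all `s`, then each of the two cases occurs for exactly
`|T|/2` of the columns. -/
theorem stmt13 (G : Type*) [Group G] [Fintype G] (h2 : ∀ g : G, g * g = 1)
    (T : Type*) [Fintype T] (hcard : Fintype.card G = Fintype.card T)
    (c : G → T → ℂ)
    (hli : LinearIndependent ℂ (fun τ : T => fun s : G => c s τ))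
    (z : G) (hz : z ≠ 1) (ζ : ℂ) (hζ : ζ = 1 ∨ ζ = -1)
    (α : G → ℝ) (hα : ∀ s, 0 < α s)
    (hcases : ∀ τ : T, (∀ s : G, c s τ = ζ * c (s * z) τ) ∨
      (∀ s : G, c s τ = -ζ * c (s * z) τ * (α s : ℂ))) :
    Nat.card {τ : T // ∀ s : G, c s τ = ζ * c (s * z) τ} = Fintype.card T / 2 ∧
    Nat.card {τ : T // ∀ s : G, c s τ = -ζ * c (s * z) τ * (α s : ℂ)}
      = Fintype.card T / 2 := by
  classical
  have hG := card_eq_two_mul_card_quotient_zpowers (h2 z) hz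
  have hζ0 : ζ ≠ 0 := by rcases hζ with rfl | rfl <;> norm_num
  have hfirst := card_le_of_forall_mem_twistedEigenspace hli (h2 z) (β := fun _ => ζ)
    (P := fun τ => ∀ s, c s τ = ζ * c (s * z) τ) fun _ h => h
  have hsecond := card_le_of_forall_mem_twistedEigenspace hli (h2 z) (β := fun s => -ζ * α s)
    (P := fun τ => ∀ s, c s τ = -ζ * c (s * z) τ * α s)
    fun _ h => mem_twistedEigenspace.2 fun s => by rw [h s]; ring
  have hdisj : Disjoint (fun τ => ∀ s, c s τ = ζ * c (s * z) τ)
      (fun τ => ∀ s, c s τ = -ζ * c (s * z) τ * α s) :=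
    Pi.disjoint_iff.2 fun τ => Prop.disjoint_iff.2 fun ⟨h₁, h₂⟩ =>
      hli.ne_zero τ (eq_zero_of_forall_eq_mul_of_forall_eq_neg_mul hζ0 hα h₁ h₂)
  have hsum := Fintype.card_subtype_or_disjoint _ _ hdisj
  rw [Fintype.card_congr (Equiv.subtypeUnivEquiv hcases)] at hsum
  simp only [Nat.card_eq_fintype_card] at hfirst hsecond hG ⊢
  omega
end
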